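/- For every integer n ≥ 2 and every integer i with 1 ≤ i ≤ n, the cardinality of 𝔅_n(i) equals ∑_{k=1}^{n−1} 2^k · ( C(2n−i−k−1, n−i) − C(2n−i−k−1, n−i−k) ). -/

import Mathlib

/-- A `B_n`-path: a word of length `2n` over the alphabet `{r, f}` (here `true` stands
for `r` and `false` for `f`) such that every prefix contains at least as many `r`'s
as `f`'s. -/
def BPaths (n : ℕ) : Finset (Fin (2*n) → Bool) :=
  Finset.univ.filter fun w =>
    ∀ m : Fin (2*n + 1),
      (Finset.univ.filter fun i : Fin (2*n) => (i : ℕ) < (m : ℕ) ∧ w i = false).card ≤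
      (Finset.univ.filter fun i : Fin (2*n) => (i : ℕ) < (m : ℕ) ∧ w i = true).card

/-- `𝔅_n(i)`: the set of `B_n`-paths whose first (leftmost) `f` occurs at the
(1-indexed) position `i`; by convention, for `i = 2n+1` this is the singleton
consisting of the all-`r` path. -/
def BPathsF (n i : ℕ) : Finset (Fin (2*n) → Bool) :=
  (BPaths n).filter fun w =>
    (∀ j : Fin (2*n), (j : ℕ) + 1 < i → w j = true) ∧
    (∀ j : Fin (2*n), (j : ℕ) + 1 = i → w j = false)

/-- The binomial coefficient `C(m, r)` for integer arguments, with the convention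
that `C(m, r) = 0` when `r < 0` or `r > m`. -/
def intChoose (m r : ℤ) : ℤ :=
  if 0 ≤ r ∧ r ≤ m then ((m.toNat).choose r.toNat : ℤ) else 0

/-!
For `i ≥ 2` a path in `𝔅_n(i)` is `r^(i-1) f` followed by a word of length `L = 2n - i` which,
started at height `i - 2`, never goes below height `0`. Splitting off the first letter shows that
the number of such words of length `L` from height `h`, where `L - h = 2E`, is the window
`∑_{j ≤ h} C(L, E + j)`; hence `|𝔅_n(i)| = ∑_{j < i-1} C(L, n - i + 1 + j)`. For `i = 1` both
this sum and `𝔅_n(1)` are empty.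

On the other side `C(m, n-i-k) = C(m, n-1)` for `m = L - 1 - k`, and `∑_k 2^k C(L-1-k, c)` counts
the subsets of `{0, …, L-1}` with more than `c` elements by the position `k` of their `(c+1)`-st
largest element, so it equals `∑_{j > c} C(L, j)`. The difference of the instances `c = n - i` and
`c = n - 1` is the same window of binomial coefficients.
-/

open Finset

lemma intChoose_eq_zero {m r : ℤ} (h : r < 0 ∨ m < r) : intChoose m r = 0 :=
  if_neg (by omega)

lemma intChoose_natCast_left (m : ℕ) (r : ℤ) :
    intChoose m r = if 0 ≤ r then (m.choose r.toNat : ℤ) else 0 := by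
  unfold intChoose
  by_cases hr : 0 ≤ r
  · by_cases hrm : r ≤ m
    · simp [hr, hrm]
    · simp [hr, hrm, Nat.choose_eq_zero_of_lt (show m < r.toNat by omega)]
  · simp [hr]

lemma intChoose_natCast (m r : ℕ) : intChoose m r = m.choose r := by
  simp [intChoose_natCast_left]

lemma intChoose_symm (m r : ℤ) : intChoose m (m - r) = intChoose m r := by
  unfold intChoose
  by_cases h : 0 ≤ r ∧ r ≤ m
  · rw [if_pos (by omega), if_pos h, show (m - r).toNat = m.toNat - r.toNat by omega,
      Nat.choose_symm (by omega)]
  · rw [if_neg (by omega), if_neg h]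

lemma intChoose_natCast_succ (m : ℕ) (r : ℤ) :
    intChoose ((m + 1 : ℕ) : ℤ) r = intChoose m r + intChoose m (r - 1) := by
  simp only [intChoose_natCast_left]
  rcases lt_trichotomy r 0 with hr | rfl | hr
  · rw [if_neg (by omega), if_neg (by omega), if_neg (by omega), add_zero]
  · simp
  · rw [if_pos hr.le, if_pos hr.le, if_pos (by omega), show r.toNat = (r - 1).toNat + 1 by omega,
      Nat.choose_succ_succ', Nat.cast_add, add_comm]

section Ballot

variable {N : ℕ}

def prefixCount (b : Bool) (w : Fin N → Bool) (m : ℕ) : ℕ :=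
  #{j : Fin N | (j : ℕ) < m ∧ w j = b}

lemma prefixCount_zero (b : Bool) (w : Fin N → Bool) : prefixCount b w 0 = 0 := by
  simp [prefixCount]

lemma prefixCount_cons_succ (b c : Bool) (v : Fin N → Bool) (m : ℕ) :
    prefixCount b (Fin.cons c v : Fin (N + 1) → Bool) (m + 1)
      = (if c = b then 1 else 0) + prefixCount b v m := by
  simp only [prefixCount, card_filter, Fin.sum_univ_succ, Fin.cons_zero, Fin.cons_succ,
    Fin.val_succ, Fin.val_zero, Nat.add_lt_add_iff_right, Nat.zero_lt_succ, true_and]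

lemma prefixCount_append {p q : ℕ} (b : Bool) (u : Fin p → Bool) (v : Fin q → Bool) (m : ℕ) :
    prefixCount b (Fin.append u v) m = prefixCount b u m + prefixCount b v (m - p) := by
  simp only [prefixCount, card_filter, Fin.sum_univ_add, Fin.append_left, Fin.append_right,
    Fin.val_castAdd, Fin.val_natAdd]
  congr 1
  exact sum_congr rfl fun j _ => by simp only [show p + (j : ℕ) < m ↔ (j : ℕ) < m - p by omega]

lemma prefixCount_false_add_true (w : Fin N → Bool) (m : ℕ) :
    prefixCount false w m + prefixCount true w m = min N m := by
  rw [← Fin.card_filter_val_lt, prefixCount, prefixCount, card_filter, card_filter, card_filter,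
    ← sum_add_distrib]
  refine sum_congr rfl fun j _ => ?_
  cases w j <;> simp

/-- Read as a lattice path (`true` up, `false` down) started at height `h`, `w` never goes below
height `0`. -/
def IsBallot (h : ℕ) (w : Fin N → Bool) : Prop :=
  ∀ m ≤ N, prefixCount false w m ≤ prefixCount true w m + h

instance (h : ℕ) : DecidablePred (IsBallot (N := N) h) := fun _ =>
  inferInstanceAs (Decidable (∀ m ≤ N, _))

lemma isBallot_cons_iff (h : ℕ) (c : Bool) (v : Fin N → Bool) :
    IsBallot h (Fin.cons c v : Fin (N + 1) → Bool) ↔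
      ∀ m ≤ N, (if c = false then 1 else 0) + prefixCount false v m
        ≤ (if c = true then 1 else 0) + prefixCount true v m + h := by
  simp only [IsBallot, ← prefixCount_cons_succ]
  constructor
  · exact fun H m hm => H (m + 1) (by omega)
  · rintro H (_ | m) hm
    · simp [prefixCount_zero]
    · exact H m (by omega)

lemma isBallot_cons_true (h : ℕ) (v : Fin N → Bool) :
    IsBallot h (Fin.cons true v : Fin (N + 1) → Bool) ↔ IsBallot (h + 1) v := by
  rw [isBallot_cons_iff]
  simp only [IsBallot, Bool.true_eq_false, if_true, if_false]
  exact forall₂_congr fun m _ => by omega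

lemma isBallot_cons_false (h : ℕ) (v : Fin N → Bool) :
    IsBallot h (Fin.cons false v : Fin (N + 1) → Bool) ↔ 0 < h ∧ IsBallot (h - 1) v := by
  rw [isBallot_cons_iff]
  simp only [IsBallot, Bool.false_eq_true, if_true, if_false]
  constructor
  · intro H
    have := H 0 (Nat.zero_le _)
    simp only [prefixCount_zero] at this
    exact ⟨by omega, fun m hm => by have := H m hm; omega⟩
  · rintro ⟨hh, H⟩ m hm
    have := H m hm
    omega

lemma card_isBallot_succ (h : ℕ) :
    #{w : Fin (N + 1) → Bool | IsBallot h w}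
      = #{v : Fin N → Bool | IsBallot (h + 1) v}
        + if h = 0 then 0 else #{v : Fin N → Bool | IsBallot (h - 1) v} := by
  simp only [card_filter]
  rw [← (Fin.consEquiv fun _ => Bool).sum_comp, Fintype.sum_prod_type, Fintype.sum_bool]
  simp only [Fin.consEquiv, Equiv.coe_fn_mk, isBallot_cons_true, isBallot_cons_false]
  rcases h with _ | h <;> simp

lemma card_isBallot_zero (h : ℕ) : #{w : Fin 0 → Bool | IsBallot h w} = 1 := by
  rw [filter_true_of_mem fun w _ m hm => by simp [Nat.le_zero.mp hm, prefixCount_zero]]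
  rfl

end Ballot

lemma card_isBallot_eq_sum_intChoose (N h : ℕ) (E : ℤ) (hE : (N : ℤ) = h + 2 * E) :
    (#{w : Fin N → Bool | IsBallot h w} : ℤ) = ∑ j ∈ range (h + 1), intChoose N (E + j) := by
  induction N generalizing h E with
  | zero =>
    rw [card_isBallot_zero, sum_eq_single (h / 2)]
    · rw [show E + ((h / 2 : ℕ) : ℤ) = 0 by omega]
      rfl
    · intro j _ hj
      exact intChoose_eq_zero (by omega)
    · exact fun hh => absurd (mem_range.mpr (by omega)) hh
  | succ N ih =>
    rw [card_isBallot_succ]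
    rcases h with _ | h
    · rw [if_pos rfl, add_zero, ih 1 (E - 1) (by push_cast at hE ⊢; omega), sum_range_succ,
        sum_range_one, sum_range_one, intChoose_natCast_succ]
      simp only [Nat.cast_zero, Nat.cast_one, add_zero]
      ring_nf
    -- after Pascal's rule both sides consist of two windows of `C(N, ·)`, differing only in
    -- where the top term `C(N, E + h + 1)` sits
    · have hshift : ∑ j ∈ range (h + 1 + 1 + 1), intChoose N (E - 1 + j)
          = ∑ j ∈ range (h + 1 + 1), intChoose N (E + j - 1) + intChoose N (E + (h + 1 : ℕ)) := by
        rw [sum_range_succ]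
        congr 1
        · exact sum_congr rfl fun j _ => by ring_nf
        · push_cast; ring_nf
      simp only [intChoose_natCast_succ, sum_add_distrib]
      rw [if_neg (Nat.succ_ne_zero h), Nat.add_sub_cancel, Nat.cast_add,
        ih (h + 1 + 1) (E - 1) (by push_cast at hE ⊢; omega), ih h E (by push_cast at hE ⊢; omega),
        hshift, sum_range_succ (n := h + 1) (fun j => intChoose N (E + j))]
      push_cast
      ring

lemma BPaths_eq_filter_isBallot (n : ℕ) : BPaths n = univ.filter (IsBallot 0) := by
  ext w
  simp only [BPaths, mem_filter, mem_univ, true_and, IsBallot, add_zero, Fin.forall_iff,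
    Nat.lt_succ_iff]
  rfl

def truesThenFalse (i : ℕ) : Fin i → Bool := fun j => decide ((j : ℕ) + 1 < i)

lemma prefixCount_true_truesThenFalse (i m : ℕ) :
    prefixCount true (truesThenFalse i) m = min m (i - 1) := by
  have : #{j : Fin i | (j : ℕ) < min m (i - 1)} = min m (i - 1) := by
    rw [Fin.card_filter_val_lt]; omega
  rw [← this, prefixCount]
  congr 1
  ext j
  simp only [truesThenFalse, decide_eq_true_eq, mem_filter, mem_univ, true_and, lt_inf_iff]
  omega

lemma isBallot_append_truesThenFalse {i L : ℕ} (hi : 2 ≤ i) (v : Fin L → Bool) :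
    IsBallot 0 (Fin.append (truesThenFalse i) v) ↔ IsBallot (i - 2) v := by
  have hu := prefixCount_false_add_true (truesThenFalse i)
  have hu' := prefixCount_true_truesThenFalse i
  simp only [IsBallot, prefixCount_append, add_zero]
  constructor
  · intro H m hm
    have := H (i + m) (by omega)
    have := hu (i + m)
    have := hu' (i + m)
    rw [Nat.add_sub_cancel_left] at *
    omega
  · intro H m hm
    have := hu m
    have := hu' m
    by_cases him : i ≤ m
    · have := H (m - i) (by omega)
      omega
    · simp only [show m - i = 0 by omega, prefixCount_zero]
      omega

lemma Fin.append_right_injective {α : Type*} {p q : ℕ} (u : Fin p → α) :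
    Function.Injective (Fin.append u : (Fin q → α) → Fin (p + q) → α) :=
  fun v v' h => funext fun j => by simpa using congrFun h (Fin.natAdd p j)

lemma filter_firstFalse_eq_image {i L : ℕ} (hi : 2 ≤ i) :
    (univ.filter (IsBallot 0)).filter (fun w : Fin (i + L) → Bool =>
        (∀ j : Fin (i + L), (j : ℕ) + 1 < i → w j = true) ∧
        (∀ j : Fin (i + L), (j : ℕ) + 1 = i → w j = false))
      = (univ.filter (IsBallot (i - 2))).image (Fin.append (truesThenFalse i)) := by
  ext w
  simp only [mem_filter, mem_univ, true_and, mem_image]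
  constructor
  · rintro ⟨hw, htrue, hfalse⟩
    have hsplit : Fin.append (truesThenFalse i) (fun j => w (Fin.natAdd i j)) = w := by
      conv_rhs => rw [← Fin.append_castAdd_natAdd (f := w)]
      congr 1
      funext j
      by_cases hj : (j : ℕ) + 1 < i
      · simp [truesThenFalse, hj, htrue (Fin.castAdd L j) hj]
      · simp [truesThenFalse, hj, hfalse (Fin.castAdd L j) (by simp only [Fin.val_castAdd]; omega)]
    exact ⟨_, (isBallot_append_truesThenFalse hi _).mp (by rwa [hsplit]), hsplit⟩
  · rintro ⟨v, hv, rfl⟩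
    have happend : ∀ j : Fin (i + L), (j : ℕ) < i →
        Fin.append (truesThenFalse i) v j = decide ((j : ℕ) + 1 < i) := fun j hj => by
      rw [show j = Fin.castAdd L ⟨j, hj⟩ from rfl, Fin.append_left]
      rfl
    refine ⟨(isBallot_append_truesThenFalse hi v).mpr hv, fun j hj => ?_, fun j hj => ?_⟩
    · simpa [happend j (by omega)] using hj
    · simp [happend j (by omega), hj]

lemma card_BPathsF_eq_card_isBallot {n i : ℕ} (hi : 2 ≤ i) (hin : i ≤ 2 * n) :
    #(BPathsF n i) = #{v : Fin (2 * n - i) → Bool | IsBallot (i - 2) v} := by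
  rw [BPathsF, BPaths_eq_filter_isBallot]
  obtain ⟨L, hL⟩ : ∃ L, 2 * n = i + L := ⟨2 * n - i, by omega⟩
  generalize 2 * n = N at hL ⊢
  subst hL
  rw [filter_firstFalse_eq_image hi, card_image_of_injective _ (Fin.append_right_injective _),
    Nat.add_sub_cancel_left]

lemma BPathsF_one {n : ℕ} (hn : 0 < n) : BPathsF n 1 = ∅ := by
  refine eq_empty_of_forall_notMem fun w hw => ?_
  simp only [BPathsF, BPaths_eq_filter_isBallot, mem_filter, mem_univ, true_and] at hw
  obtain ⟨hw, -, hfirst⟩ := hw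
  have hnone : prefixCount true w 1 = 0 :=
    card_eq_zero.mpr <| filter_eq_empty_iff.mpr fun j _ ⟨hj, hwj⟩ => by
      simp [hfirst j (by omega)] at hwj
  have := hw 1 (by omega)
  have := prefixCount_false_add_true w 1
  omega

lemma card_BPathsF_eq_sum_choose {n i : ℕ} (hi : 1 ≤ i) (hin : i ≤ n) :
    #(BPathsF n i) = ∑ j ∈ range (i - 1), (2 * n - i).choose (n - i + 1 + j) := by
  rcases hi.eq_or_lt with rfl | hi
  · simp [BPathsF_one (show 0 < n by omega)]
  · zify
    rw [card_BPathsF_eq_card_isBallot hi (by omega),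
      card_isBallot_eq_sum_intChoose _ _ (n - i + 1 : ℕ) (by push_cast; omega),
      show i - 2 + 1 = i - 1 by omega]
    exact sum_congr rfl fun j _ => by exact_mod_cast intChoose_natCast _ _

lemma sum_range_two_pow_mul_choose (L c : ℕ) :
    ∑ p ∈ range L, 2 ^ p * (L - 1 - p).choose c = ∑ j ∈ range L, L.choose (c + 1 + j) := by
  induction L with
  | zero => simp
  | succ L ih =>
    have hleft : ∑ p ∈ range (L + 1), 2 ^ p * (L + 1 - 1 - p).choose c
        = 2 * ∑ p ∈ range L, 2 ^ p * (L - 1 - p).choose c + L.choose c := by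
      rw [sum_range_succ', mul_sum]
      congr 1
      · refine sum_congr rfl fun p _ => ?_
        rw [pow_succ, show L + 1 - 1 - (p + 1) = L - 1 - p by omega]
        ring
      · simp
    have hright : ∑ j ∈ range (L + 1), (L + 1).choose (c + 1 + j)
        = 2 * ∑ j ∈ range L, L.choose (c + 1 + j) + L.choose c := by
      have hpascal : ∀ j, (L + 1).choose (c + 1 + j) = L.choose (c + j) + L.choose (c + 1 + j) :=
        fun j => by rw [show c + 1 + j = c + j + 1 by omega, Nat.choose_succ_succ']
      have hlow : ∑ j ∈ range (L + 1), L.choose (c + j)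
          = ∑ j ∈ range L, L.choose (c + 1 + j) + L.choose c := by
        rw [sum_range_succ', add_zero]
        exact congrArg (· + _) (sum_congr rfl fun j _ => by rw [← add_assoc, add_right_comm])
      have hhigh : ∑ j ∈ range (L + 1), L.choose (c + 1 + j)
          = ∑ j ∈ range L, L.choose (c + 1 + j) := by
        rw [sum_range_succ, Nat.choose_eq_zero_of_lt (by omega), add_zero]
      simp only [hpascal, sum_add_distrib, hlow, hhigh]
      ring
    rw [hleft, hright, ih]

lemma sum_range_two_pow_mul_choose_split {n i : ℕ} (hi : 1 ≤ i) (hin : i ≤ n) :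
    ∑ p ∈ range (2 * n - i), 2 ^ p * (2 * n - i - 1 - p).choose (n - i)
      = ∑ j ∈ range (i - 1), (2 * n - i).choose (n - i + 1 + j)
        + ∑ p ∈ range (2 * n - i), 2 ^ p * (2 * n - i - 1 - p).choose (n - 1) := by
  rw [sum_range_two_pow_mul_choose, sum_range_two_pow_mul_choose]
  set L := 2 * n - i
  obtain ⟨M, hM⟩ : ∃ M, L = i - 1 + M := ⟨L - (i - 1), by omega⟩
  have hlow : ∑ j ∈ range L, L.choose (n - i + 1 + j)
      = ∑ j ∈ range (i - 1), L.choose (n - i + 1 + j) + ∑ j ∈ range M, L.choose (n + j) := by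
    rw [show range L = range (i - 1 + M) by rw [hM], sum_range_add]
    congr 1
    exact sum_congr rfl fun j _ => by congr 1; omega
  have hhigh : ∑ j ∈ range L, L.choose (n - 1 + 1 + j) = ∑ j ∈ range M, L.choose (n + j) := by
    rw [show range L = range (M + (i - 1)) by rw [hM, add_comm], sum_range_add,
      sum_eq_zero (s := range (i - 1)) fun j _ => Nat.choose_eq_zero_of_lt (by omega), add_zero]
    exact sum_congr rfl fun j _ => by congr 1; omega
  rw [hlow, hhigh]

lemma sum_Icc_two_pow_mul_intChoose_sub {n i : ℕ} (hi : 1 ≤ i) (hin : i ≤ n) :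
    ∑ k ∈ Icc 1 (n - 1), (2 : ℤ) ^ k *
        (intChoose (2 * (n : ℤ) - i - k - 1) ((n : ℤ) - i) -
          intChoose (2 * (n : ℤ) - i - k - 1) ((n : ℤ) - i - k))
      = ∑ k ∈ range (2 * n - i), (2 : ℤ) ^ k *
          (((2 * n - i - 1 - k).choose (n - i) : ℤ) - (2 * n - i - 1 - k).choose (n - 1)) := by
  have hsub : Icc 1 (n - 1) ⊆ range (2 * n - i) := fun k hk => by
    simp only [mem_Icc, mem_range] at hk ⊢
    omega
  rw [sum_subset hsub fun k _ hk => ?_]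
  · refine sum_congr rfl fun k hk => ?_
    rw [mem_range] at hk
    have hm : 2 * (n : ℤ) - i - k - 1 = (2 * n - i - 1 - k : ℕ) := by omega
    rw [hm, ← intChoose_symm _ ((n : ℤ) - i - k),
      show ((2 * n - i - 1 - k : ℕ) : ℤ) - ((n : ℤ) - i - k) = (n - 1 : ℕ) by omega,
      show (n : ℤ) - i = (n - i : ℕ) by omega, intChoose_natCast, intChoose_natCast]
  · rcases Nat.eq_zero_or_pos k with rfl | hk0
    · simp
    · rw [mem_Icc, not_and_or] at hk
      rw [intChoose_eq_zero (by omega), intChoose_eq_zero (by omega), sub_zero, mul_zero]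

theorem card_BPathsF_small_general (n i : ℕ) (hi1 : 1 ≤ i) (hin : i ≤ n) :
    ((BPathsF n i).card : ℤ) =
      ∑ k ∈ Finset.Icc 1 (n-1), (2:ℤ)^k *
        (intChoose (2*(n:ℤ) - i - k - 1) ((n:ℤ) - i) -
          intChoose (2*(n:ℤ) - i - k - 1) ((n:ℤ) - i - k)) := by
  have hsplit := sum_range_two_pow_mul_choose_split hi1 hin
  rw [sum_Icc_two_pow_mul_intChoose_sub hi1 hin, card_BPathsF_eq_sum_choose hi1 hin]
  simp only [mul_sub, sum_sub_distrib]
  zify at hsplit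
  push_cast
  linarith

/-- For `1 ≤ i ≤ n`, the cardinality of `𝔅_n(i)` equals
`∑_{k=1}^{n-1} 2^k · (C(2n-i-k-1, n-i) - C(2n-i-k-1, n-i-k))`. -/
theorem card_BPathsF_small (n i : ℕ) (hn : 2 ≤ n) (hi1 : 1 ≤ i) (hin : i ≤ n) :
    ((BPathsF n i).card : ℤ) =
      ∑ k ∈ Finset.Icc 1 (n-1), (2:ℤ)^k *
        (intChoose (2*(n:ℤ) - i - k - 1) ((n:ℤ) - i) -
          intChoose (2*(n:ℤ) - i - k - 1) ((n:ℤ) - i - k)) :=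
  card_BPathsF_small_general n i hi1 hin
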